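/- Let H and Λ be real symmetric positive semidefinite n×n matrices, let θ₀, θ̂ ∈ ℝⁿ, set Δθ = θ̂ − θ₀, and assume Δθᵀ (H + Λ) Δθ > 0. Define Q : ℝⁿ → ℝ by Q(θ) = ½·(θ − θ̂)ᵀ H (θ − θ̂) + ½·(θ − θ₀)ᵀ Λ (θ − θ₀), and set λ* = (Δθᵀ H Δθ)/(Δθᵀ (H + Λ) Δθ). Then λ* ∈ [0,1] and for every λ ∈ ℝ with λ ≠ λ*, Q(θ₀ + λ*·Δθ) < Q(θ₀ + λ·Δθ). -/

import Mathlib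

/-!
Along the path `θ₀ + λ • Δθ` both quadratic terms are multiples of squares: the data term is
`½ a (λ - 1)²` and the prior term `½ b λ²`, with `a = Δθᵀ H Δθ ≥ 0` and `b = Δθᵀ Λ Δθ ≥ 0`.
Completing the square, `a (λ - 1)² + b λ² = (a + b) (λ - a / (a + b))² + a b / (a + b)`, so for
`a + b > 0` the path objective is a strictly convex parabola with vertex `λ* = a / (a + b) ∈ [0, 1]`.
-/

open Matrix

theorem Matrix.smul_dotProduct_mulVec_smul {n R : Type*} [Fintype n] [CommRing R]
    (M : Matrix n n R) (c : R) (v : n → R) :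
    (c • v) ⬝ᵥ M *ᵥ (c • v) = c ^ 2 * (v ⬝ᵥ M *ᵥ v) := by
  rw [mulVec_smul, smul_dotProduct, dotProduct_smul, smul_eq_mul, smul_eq_mul]
  ring

theorem div_add_mem_Icc {a b : ℝ} (ha : 0 ≤ a) (hb : 0 ≤ b) : a / (a + b) ∈ Set.Icc 0 1 :=
  ⟨by positivity, div_le_one_of_le₀ (le_add_of_nonneg_right hb) (add_nonneg ha hb)⟩

/-- Twice the objective along the merging path, with `a`, `b` the curvatures of the data and
prior terms in the direction `Δθ`. -/
def pathLoss (a b t : ℝ) : ℝ := a * (t - 1) ^ 2 + b * t ^ 2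

theorem pathLoss_eq {a b : ℝ} (hab : a + b ≠ 0) (t : ℝ) :
    pathLoss a b t = (a + b) * (t - a / (a + b)) ^ 2 + a * b / (a + b) := by
  unfold pathLoss
  field_simp
  ring

theorem pathLoss_lt_of_ne {a b : ℝ} (hab : 0 < a + b) {t : ℝ} (ht : t ≠ a / (a + b)) :
    pathLoss a b (a / (a + b)) < pathLoss a b t := by
  rw [pathLoss_eq hab.ne', pathLoss_eq hab.ne', sub_self]
  have : 0 < (a + b) * (t - a / (a + b)) ^ 2 :=
    mul_pos hab (pow_two_pos_of_ne_zero (sub_ne_zero.2 ht))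
  linarith

theorem quadForms_along_line {n : Type*} [Fintype n] (H Λ : Matrix n n ℝ) (θ₀ θh : n → ℝ)
    (t : ℝ) :
    (1 / 2) * ((θ₀ + t • (θh - θ₀) - θh) ⬝ᵥ H *ᵥ (θ₀ + t • (θh - θ₀) - θh))
        + (1 / 2) * ((θ₀ + t • (θh - θ₀) - θ₀) ⬝ᵥ Λ *ᵥ (θ₀ + t • (θh - θ₀) - θ₀))
      = (1 / 2) * pathLoss ((θh - θ₀) ⬝ᵥ H *ᵥ (θh - θ₀)) ((θh - θ₀) ⬝ᵥ Λ *ᵥ (θh - θ₀)) t := by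
  have hdata : θ₀ + t • (θh - θ₀) - θh = (t - 1) • (θh - θ₀) := by
    rw [sub_smul, one_smul]; abel
  rw [hdata, add_sub_cancel_left, smul_dotProduct_mulVec_smul, smul_dotProduct_mulVec_smul,
    pathLoss]
  ring

/-- Vector-level form of Eq. 17: the closed-form merging coefficient
uniquely minimizes the Laplace-approximated MAP objective along the
merging path. -/
theorem stmt_8 {n : ℕ} (H Λ : Matrix (Fin n) (Fin n) ℝ)
    (hH : H.PosSemidef) (hΛ : Λ.PosSemidef)
    (θ₀ θh : Fin n → ℝ)
    (hpos : 0 < (θh - θ₀) ⬝ᵥ (H + Λ) *ᵥ (θh - θ₀))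
    (Q : (Fin n → ℝ) → ℝ)
    (hQ : ∀ θ : Fin n → ℝ,
      Q θ = (1 / 2) * ((θ - θh) ⬝ᵥ H *ᵥ (θ - θh))
          + (1 / 2) * ((θ - θ₀) ⬝ᵥ Λ *ᵥ (θ - θ₀)))
    (ls : ℝ)
    (hls : ls = ((θh - θ₀) ⬝ᵥ H *ᵥ (θh - θ₀))
        / ((θh - θ₀) ⬝ᵥ (H + Λ) *ᵥ (θh - θ₀))) :
    ls ∈ Set.Icc (0 : ℝ) 1 ∧
      ∀ lam : ℝ, lam ≠ ls →
        Q (θ₀ + ls • (θh - θ₀)) < Q (θ₀ + lam • (θh - θ₀)) := by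
  rw [add_mulVec, dotProduct_add] at hpos hls
  have ha : 0 ≤ (θh - θ₀) ⬝ᵥ H *ᵥ (θh - θ₀) := by
    simpa using hH.dotProduct_mulVec_nonneg (θh - θ₀)
  have hb : 0 ≤ (θh - θ₀) ⬝ᵥ Λ *ᵥ (θh - θ₀) := by
    simpa using hΛ.dotProduct_mulVec_nonneg (θh - θ₀)
  refine ⟨hls ▸ div_add_mem_Icc ha hb, fun lam hlam => ?_⟩
  rw [hQ, hQ, quadForms_along_line, quadForms_along_line, hls]
  exact mul_lt_mul_of_pos_left (pathLoss_lt_of_ne hpos (hls ▸ hlam)) one_half_pos
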